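/- arXiv:2510.04608 — 4 statements merged into one kernel-verified Lean document; each statement's English description precedes it below -/
import Mathlib

section
/- Let K(t,s) be a continuous n×n complex matrix kernel on [a,b]×[a,b], and for ξ ∈ (a,b] let Γ_ξ(t,s) be the resolvent kernel, i.e. a continuous matrix function satisfying both Γ_ξ(t,s) − ∫_a^ξ K(t,u)Γ_ξ(u,s) du = K(t,s) and Γ_ξ(t,s) − ∫_a^ξ Γ_ξ(t,u)K(u,s) du = K(t,s) for a ≤ t,s ≤ ξ. If Γ_ξ(t,s) is continuously differentiable in ξ, then ∂Γ_ξ(t,s)/∂ξ = Γ_ξ(t,ξ)·Γ_ξ(ξ,s). -/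
/-!
Differentiating the first resolvent equation
`Γ_η(t,s) = K(t,s) + ∫_a^η K(t,u) Γ_η(u,s) du` in `η` from the left at `η = ξ` (the kernel
`Γ_η(u,s)` is only constrained for `u, s ≤ η`) shows that, for fixed `s`, the column
`h(t) = ∂_ξ Γ_ξ(t,s) - Γ_ξ(t,ξ) Γ_ξ(ξ,s)` solves the homogeneous equation `h = ∫_a^ξ K h`, because
`Γ_ξ(·,ξ)` solves the first resolvent equation with right-hand side `K(·,ξ)`. Integrating
`Γ_ξ(t,·) h` and using the second resolvent equation `∫_a^ξ Γ_ξ K = Γ_ξ - K` gives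
`∫_a^ξ K(t,u) h(u) du = 0`, hence `h = 0`.
-/

open Matrix intervalIntegral Set

attribute [local instance] Matrix.normedAddCommGroup Matrix.normedSpace

open Filter Function

section Leibniz

variable {E : Type*} [NormedAddCommGroup E] [NormedSpace ℝ E]

theorem hasDerivAt_intervalIntegral_diag [CompleteSpace E] {f : ℝ → ℝ → E}
    (hf : Continuous (uncurry f)) (ξ : ℝ) :
    HasDerivAt (fun η => ∫ u in ξ..η, f η u) (f ξ ξ) ξ := by
  refine hasDerivAt_iff_isLittleO.2 (Asymptotics.isLittleO_iff.2 fun ε hε => ?_)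
  obtain ⟨δ, hδ, hfδ⟩ := Metric.continuousAt_iff.1 (hf.continuousAt (x := (ξ, ξ))) ε hε
  filter_upwards [Metric.ball_mem_nhds ξ hδ] with η hη
  have hsplit : (∫ u in ξ..η, f η u) - (∫ u in ξ..ξ, f ξ u) - (η - ξ) • f ξ ξ
      = ∫ u in ξ..η, (f η u - f ξ ξ) := by
    rw [integral_same, sub_zero, integral_sub ((hf.uncurry_left η).intervalIntegrable _ _)
      intervalIntegrable_const, intervalIntegral.integral_const]
  rw [hsplit, Real.norm_eq_abs]
  refine norm_integral_le_of_norm_le_const fun u hu => ?_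
  rw [← dist_eq_norm]
  refine (hfδ (x := (η, u)) ?_).le
  rw [Prod.dist_eq, max_lt_iff]
  refine ⟨hη, lt_of_le_of_lt ?_ hη⟩
  simpa only [Real.dist_eq] using abs_sub_left_of_mem_uIcc (uIoc_subset_uIcc hu)

theorem hasDerivAt_intervalIntegral_of_hasDerivAt {f g : ℝ → ℝ → E}
    (hf : ∀ x, Continuous (f x)) (hg : Continuous (uncurry g))
    (hfg : ∀ x u, HasDerivAt (f · u) (g x u) x) (a b x₀ : ℝ) :
    HasDerivAt (fun x => ∫ u in a..b, f x u) (∫ u in a..b, g x₀ u) x₀ := by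
  obtain ⟨C, hC⟩ := ((isCompact_closedBall x₀ 1).prod
    (isCompact_uIcc (a := a) (b := b))).exists_bound_of_continuousOn hg.continuousOn
  refine (hasDerivAt_integral_of_dominated_loc_of_deriv_le (bound := fun _ => C)
    (Metric.ball_mem_nhds x₀ one_pos) (Eventually.of_forall fun x => (hf x).aestronglyMeasurable)
    ((hf x₀).intervalIntegrable _ _) (hg.uncurry_left x₀).aestronglyMeasurable
    (MeasureTheory.ae_of_all _ fun u hu x hx =>
      hC (x, u) ⟨Metric.ball_subset_closedBall hx, uIoc_subset_uIcc hu⟩)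
    intervalIntegrable_const (MeasureTheory.ae_of_all _ fun u _ x _ => hfg x u)).2

theorem hasDerivAt_intervalIntegral_upper_of_hasDerivAt [CompleteSpace E] {f g : ℝ → ℝ → E}
    (hf : Continuous (uncurry f)) (hg : Continuous (uncurry g))
    (hfg : ∀ x u, HasDerivAt (f · u) (g x u) x) (a ξ : ℝ) :
    HasDerivAt (fun η => ∫ u in a..η, f η u) (f ξ ξ + ∫ u in a..ξ, g ξ u) ξ := by
  have hsplit : (fun η => ∫ u in a..η, f η u)
      = fun η => (∫ u in a..ξ, f η u) + ∫ u in ξ..η, f η u := by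
    ext η
    rw [integral_add_adjacent_intervals ((hf.uncurry_left η).intervalIntegrable _ _)
      ((hf.uncurry_left η).intervalIntegrable _ _)]
  rw [hsplit, add_comm (f ξ ξ)]
  exact (hasDerivAt_intervalIntegral_of_hasDerivAt (fun x => hf.uncurry_left x) hg hfg a ξ ξ).add
    (hasDerivAt_intervalIntegral_diag hf ξ)

/-- Only `f η u` for `u ≤ η` enters; on that region `f` agrees with
`F η u = f ξ u + ∫_ξ^η g l u dl`, which is differentiable in `η` everywhere. -/
theorem hasDerivWithinAt_intervalIntegral_upper_of_hasDerivAt_le [CompleteSpace E]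
    {f g : ℝ → ℝ → E} {a m ξ : ℝ} (ham : a ≤ m) (hmξ : m < ξ) (hf : Continuous (f ξ))
    (hg : Continuous (uncurry g))
    (hfg : ∀ x ∈ Ioc m ξ, ∀ u ∈ Icc a x, HasDerivAt (f · u) (g x u) x) :
    HasDerivWithinAt (fun η => ∫ u in a..η, f η u) (f ξ ξ + ∫ u in a..ξ, g ξ u) (Iic ξ) ξ := by
  set F : ℝ → ℝ → E := fun x u => f ξ u + ∫ l in ξ..x, g l u
  have hgu : ∀ u, Continuous (g · u) := fun u => hg.uncurry_right u
  have hF : Continuous (uncurry F) := by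
    have hG : Continuous fun p : ℝ × ℝ => ∫ l in ξ..p.1, g l p.2 :=
      continuous_parametric_intervalIntegral_of_continuous (f := fun (p : ℝ × ℝ) l => g l p.2)
        (hg.comp (by fun_prop : Continuous fun q : (ℝ × ℝ) × ℝ => (q.2, q.1.2))) continuous_fst
    exact (hf.comp continuous_snd).add hG
  have hFg : ∀ x u, HasDerivAt (F · u) (g x u) x := fun x u =>
    ((hgu u).integral_hasStrictDerivAt ξ x).hasDerivAt.const_add _
  have hfF : ∀ η ∈ Ioc m ξ, ∫ u in a..η, f η u = ∫ u in a..η, F η u := by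
    refine fun η hη => integral_congr fun u hu => ?_
    rw [uIcc_of_le (ham.trans hη.1.le)] at hu
    have hηl : ∀ l ∈ uIcc ξ η, η ≤ l ∧ l ≤ ξ := fun l hl => by rwa [uIcc_of_ge hη.2] at hl
    have hFTC := integral_eq_sub_of_hasDerivAt (f := (f · u))
      (fun l hl => hfg l ⟨hη.1.trans_le (hηl l hl).1, (hηl l hl).2⟩ u
        ⟨hu.1, hu.2.trans (hηl l hl).1⟩)
      ((hgu u).intervalIntegrable ξ η)
    simp only [F, hFTC]
    abel
  have hFξ : F ξ ξ = f ξ ξ := by simp [F]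
  rw [← hFξ]
  exact (hasDerivAt_intervalIntegral_upper_of_hasDerivAt hF hg hFg a ξ).hasDerivWithinAt
    |>.congr_of_eventuallyEq (eventuallyEq_of_mem (Ioc_mem_nhdsLE hmξ) hfF) (hfF ξ ⟨hmξ, le_rfl⟩)

end Leibniz

theorem eqOn_Icc_of_eqOn_Ico {X : Type*} [TopologicalSpace X] [T2Space X] {f g : ℝ → X}
    {a b : ℝ} (hab : a < b) (hf : Continuous f) (hg : Continuous g) (h : EqOn f g (Ico a b)) :
    EqOn f g (Icc a b) := by
  simpa only [closure_Ico hab.ne] using h.closure hf hg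

namespace Matrix

/-- With the entrywise norm only a local instance, the enorm structure that integrability asks
for is not found through the product topology of `Matrix`. -/
noncomputable instance {m n α : Type*} [Fintype m] [Fintype n] [NormedAddCommGroup α] :
    ENormedAddCommMonoid (Matrix m n α) :=
  NormedAddCommGroup.toENormedAddCommMonoid

variable {ι : Type*} [Fintype ι]

noncomputable def mulLeftCLM (c : Matrix ι ι ℂ) : Matrix ι ι ℂ →L[ℝ] Matrix ι ι ℂ where
  toLinearMap := (LinearMap.mulLeft ℂ c).restrictScalars ℝ
  cont := continuous_const.mul continuous_id

noncomputable def mulRightCLM (c : Matrix ι ι ℂ) : Matrix ι ι ℂ →L[ℝ] Matrix ι ι ℂ where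
  toLinearMap := (LinearMap.mulRight ℂ c).restrictScalars ℝ
  cont := continuous_id.mul continuous_const

theorem intervalIntegral_mul_left {f : ℝ → Matrix ι ι ℂ} {a b : ℝ}
    (hf : IntervalIntegrable f MeasureTheory.volume a b) (c : Matrix ι ι ℂ) :
    ∫ u in a..b, c * f u = c * ∫ u in a..b, f u :=
  (mulLeftCLM c).intervalIntegral_comp_comm hf

theorem intervalIntegral_mul_right {f : ℝ → Matrix ι ι ℂ} {a b : ℝ}
    (hf : IntervalIntegrable f MeasureTheory.volume a b) (c : Matrix ι ι ℂ) :
    ∫ u in a..b, f u * c = (∫ u in a..b, f u) * c :=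
  (mulRightCLM c).intervalIntegral_comp_comm hf

theorem _root_.HasDerivAt.matrix_const_mul {f : ℝ → Matrix ι ι ℂ} {f' : Matrix ι ι ℂ} {x : ℝ}
    (hf : HasDerivAt f f' x) (c : Matrix ι ι ℂ) : HasDerivAt (fun y => c * f y) (c * f') x :=
  (mulLeftCLM c).hasFDerivAt.comp_hasDerivAt x hf

theorem eq_zero_of_eq_intervalIntegral_mul {K Γ : ℝ → ℝ → Matrix ι ι ℂ} {h : ℝ → Matrix ι ι ℂ}
    {a ξ : ℝ} (hK : Continuous (uncurry K)) (hΓ : Continuous (uncurry Γ)) (hh : Continuous h)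
    (hΓK : ∀ t ∈ Icc a ξ, ∀ s ∈ Icc a ξ, Γ t s - ∫ u in a..ξ, Γ t u * K u s = K t s)
    (hKh : ∀ t ∈ Icc a ξ, h t = ∫ u in a..ξ, K t u * h u) : ∀ t ∈ Icc a ξ, h t = 0 := by
  intro t ht
  have haξ : a ≤ ξ := ht.1.trans ht.2
  have hKh' : ∀ v, Continuous fun u => K v u * h u := fun v => by fun_prop
  have hΓK' : ∀ u ∈ Icc a ξ, ∫ v in a..ξ, Γ t v * K v u = Γ t u - K t u := fun u hu => by
    rw [← hΓK t ht u hu]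
    abel
  have hΓKh : Continuous fun p : ℝ × ℝ => Γ t p.1 * (K p.1 p.2 * h p.2) := by fun_prop
  have key : ∫ v in a..ξ, Γ t v * h v
      = (∫ u in a..ξ, Γ t u * h u) - ∫ u in a..ξ, K t u * h u := calc
    ∫ v in a..ξ, Γ t v * h v = ∫ v in a..ξ, Γ t v * ∫ u in a..ξ, K v u * h u :=
      integral_congr fun v hv => by rw [← hKh v (uIcc_of_le haξ ▸ hv)]
    _ = ∫ v in a..ξ, ∫ u in a..ξ, Γ t v * (K v u * h u) := integral_congr fun v _ =>
      (intervalIntegral_mul_left ((hKh' v).intervalIntegrable _ _) _).symm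
    _ = ∫ u in a..ξ, ∫ v in a..ξ, Γ t v * (K v u * h u) :=
      MeasureTheory.intervalIntegral_intervalIntegral_swap <|
        (hΓKh.continuousOn.integrableOn_compact (isCompact_uIcc.prod isCompact_uIcc)).mono_set
          (prod_mono uIoc_subset_uIcc uIoc_subset_uIcc)
    _ = ∫ u in a..ξ, (Γ t u - K t u) * h u := integral_congr fun u hu => by
      simp only [← mul_assoc]
      rw [intervalIntegral_mul_right
          ((by fun_prop : Continuous fun v => Γ t v * K v u).intervalIntegrable _ _),
        hΓK' u (uIcc_of_le haξ ▸ hu)]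
    _ = (∫ u in a..ξ, Γ t u * h u) - ∫ u in a..ξ, K t u * h u := by
      simp only [sub_mul]
      exact integral_sub ((by fun_prop : Continuous fun u => Γ t u * h u).intervalIntegrable _ _)
        ((hKh' t).intervalIntegrable _ _)
  rw [hKh t ht]
  exact sub_eq_self.mp key.symm

theorem sub_mul_eq_intervalIntegral_mul_sub_mul {κ x y : ℝ → Matrix ι ι ℂ}
    {x₀ y₀ k c : Matrix ι ι ℂ} {a ξ : ℝ} (hκ : Continuous κ) (hx : Continuous x)
    (hy : Continuous y) (hx₀ : x₀ = k * c + ∫ u in a..ξ, κ u * x u)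
    (hy₀ : y₀ = k + ∫ u in a..ξ, κ u * y u) :
    x₀ - y₀ * c = ∫ u in a..ξ, κ u * (x u - y u * c) := by
  simp only [mul_sub, ← mul_assoc]
  rw [integral_sub ((by fun_prop : Continuous fun u => κ u * x u).intervalIntegrable _ _)
    ((by fun_prop : Continuous fun u => κ u * y u * c).intervalIntegrable _ _),
    intervalIntegral_mul_right
      ((by fun_prop : Continuous fun u => κ u * y u).intervalIntegrable _ _),
    hx₀, hy₀, add_mul]
  abel

theorem deriv_eq_of_sub_intervalIntegral_mul_eq_const {κ : ℝ → Matrix ι ι ℂ}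
    {G D : ℝ → ℝ → Matrix ι ι ℂ} {c : Matrix ι ι ℂ} {a m ξ t : ℝ} (ham : a ≤ m) (hmξ : m < ξ)
    (ht : t ∈ Icc a ξ) (hκ : Continuous κ) (hG : Continuous (G ξ)) (hD : Continuous (uncurry D))
    (hGκ : ∀ η ∈ Ioc m ξ, G η t - ∫ u in a..η, κ u * G η u = c)
    (hGD : ∀ η ∈ Ioc m ξ, ∀ u ∈ Icc a η, HasDerivAt (G · u) (D η u) η) :
    D ξ t = κ ξ * G ξ ξ + ∫ u in a..ξ, κ u * D ξ u := by
  have hint : HasDerivWithinAt (fun η => ∫ u in a..η, κ u * G η u)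
      (κ ξ * G ξ ξ + ∫ u in a..ξ, κ u * D ξ u) (Iic ξ) ξ :=
    hasDerivWithinAt_intervalIntegral_upper_of_hasDerivAt_le ham hmξ (by fun_prop) (by fun_prop)
      fun x hx u hu => (hGD x hx u hu).matrix_const_mul (κ u)
  have hGt : ∀ η ∈ Ioc m ξ, G η t = c + ∫ u in a..η, κ u * G η u := fun η hη =>
    eq_add_of_sub_eq (hGκ η hη)
  have hGt' : HasDerivWithinAt (G · t) (κ ξ * G ξ ξ + ∫ u in a..ξ, κ u * D ξ u) (Iic ξ) ξ :=
    (hint.const_add c).congr_of_eventuallyEq (eventuallyEq_of_mem (Ioc_mem_nhdsLE hmξ) hGt)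
      (hGt ξ ⟨hmξ, le_rfl⟩)
  exact (uniqueDiffWithinAt_Iic ξ).eq_deriv _ (hGD ξ ⟨hmξ, le_rfl⟩ t ht).hasDerivWithinAt hGt'

end Matrix

theorem resolvent_deriv_general (n : ℕ) (a b : ℝ)
    (K : ℝ → ℝ → Matrix (Fin n) (Fin n) ℂ)
    (hK : Continuous fun p : ℝ × ℝ => K p.1 p.2)
    (Γ : ℝ → ℝ → ℝ → Matrix (Fin n) (Fin n) ℂ)  -- Γ ξ t s
    (hΓcont : Continuous fun p : ℝ × ℝ × ℝ => Γ p.1 p.2.1 p.2.2)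
    (hres1 : ∀ ξ ∈ Ioc a b, ∀ t ∈ Icc a ξ, ∀ s ∈ Icc a ξ,
      Γ ξ t s - ∫ u in a..ξ, K t u * Γ ξ u s = K t s)
    (hres2 : ∀ ξ ∈ Ioc a b, ∀ t ∈ Icc a ξ, ∀ s ∈ Icc a ξ,
      Γ ξ t s - ∫ u in a..ξ, Γ ξ t u * K u s = K t s)
    (D : ℝ → ℝ → ℝ → Matrix (Fin n) (Fin n) ℂ)  -- ∂Γ/∂ξ
    (hDcont : Continuous fun p : ℝ × ℝ × ℝ => D p.1 p.2.1 p.2.2)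
    (hderiv : ∀ ξ ∈ Ioc a b, ∀ t ∈ Icc a ξ, ∀ s ∈ Icc a ξ,
      HasDerivAt (fun η => Γ η t s) (D ξ t s) ξ) :
    ∀ ξ ∈ Ioc a b, ∀ t ∈ Icc a ξ, ∀ s ∈ Icc a ξ,
      D ξ t s = Γ ξ t ξ * Γ ξ ξ s := by
  intro ξ hξ
  have haξ := hξ.1
  have hlin : ∀ s ∈ Ico a ξ, ∀ t ∈ Ico a ξ,
      D ξ t s = K t ξ * Γ ξ ξ s + ∫ u in a..ξ, K t u * D ξ u s := by
    intro s hs t ht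
    have hm : max (max t s) a < ξ := max_lt (max_lt ht.2 hs.2) haξ
    have hsub : ∀ η ∈ Ioc (max (max t s) a) ξ, η ∈ Ioc a b ∧ t ≤ η ∧ s ≤ η := fun η hη =>
      have hη' := max_lt_iff.1 hη.1
      ⟨⟨hη'.2, hη.2.trans hξ.2⟩, (max_lt_iff.1 hη'.1).1.le, (max_lt_iff.1 hη'.1).2.le⟩
    exact Matrix.deriv_eq_of_sub_intervalIntegral_mul_eq_const (G := fun η u => Γ η u s)
      (D := fun η u => D η u s) (le_max_right _ _) hm ⟨ht.1, ht.2.le⟩ (by fun_prop) (by fun_prop)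
      (hDcont.comp (by fun_prop : Continuous fun p : ℝ × ℝ => (p.1, p.2, s)))
      (fun η hη => hres1 η (hsub η hη).1 t ⟨ht.1, (hsub η hη).2.1⟩ s ⟨hs.1, (hsub η hη).2.2⟩)
      (fun η hη u hu => hderiv η (hsub η hη).1 u hu s ⟨hs.1, (hsub η hη).2.2⟩)
  intro t ht s hs
  refine eqOn_Icc_of_eqOn_Ico (f := (D ξ t ·)) (g := (Γ ξ t ξ * Γ ξ ξ ·)) haξ (by fun_prop)
    (by fun_prop) (fun s hs => ?_) hs
  refine sub_eq_zero.mp (Matrix.eq_zero_of_eq_intervalIntegral_mul (Γ := Γ ξ)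
    (h := fun u => D ξ u s - Γ ξ u ξ * Γ ξ ξ s) hK
    (hΓcont.comp (by fun_prop : Continuous fun p : ℝ × ℝ => (ξ, p))) (by fun_prop)
    (hres2 ξ hξ) (fun t ht => ?_) t ht)
  exact Matrix.sub_mul_eq_intervalIntegral_mul_sub_mul (κ := K t) (x := (D ξ · s))
    (y := (Γ ξ · ξ)) (by fun_prop) (by fun_prop) (by fun_prop)
    (eqOn_Icc_of_eqOn_Ico haξ (by fun_prop) (by fun_prop) (hlin s hs) ht)
    (eq_add_of_sub_eq (hres1 ξ hξ t ht ξ ⟨haξ.le, le_rfl⟩))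

/-- the resolvent kernel Γ_ξ(t,s) of a continuous matrix kernel K,
assumed C¹ in ξ, satisfies ∂Γ_ξ(t,s)/∂ξ = Γ_ξ(t,ξ)·Γ_ξ(ξ,s). -/
theorem resolvent_deriv (n : ℕ) (a b : ℝ) (hab : a < b)
    (K : ℝ → ℝ → Matrix (Fin n) (Fin n) ℂ)
    (hK : Continuous fun p : ℝ × ℝ => K p.1 p.2)
    (Γ : ℝ → ℝ → ℝ → Matrix (Fin n) (Fin n) ℂ)  -- Γ ξ t s
    (hΓcont : Continuous fun p : ℝ × ℝ × ℝ => Γ p.1 p.2.1 p.2.2)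
    (hres1 : ∀ ξ ∈ Ioc a b, ∀ t ∈ Icc a ξ, ∀ s ∈ Icc a ξ,
      Γ ξ t s - ∫ u in a..ξ, K t u * Γ ξ u s = K t s)
    (hres2 : ∀ ξ ∈ Ioc a b, ∀ t ∈ Icc a ξ, ∀ s ∈ Icc a ξ,
      Γ ξ t s - ∫ u in a..ξ, Γ ξ t u * K u s = K t s)
    (D : ℝ → ℝ → ℝ → Matrix (Fin n) (Fin n) ℂ)  -- ∂Γ/∂ξ
    (hDcont : Continuous fun p : ℝ × ℝ × ℝ => D p.1 p.2.1 p.2.2)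
    (hderiv : ∀ ξ ∈ Ioc a b, ∀ t ∈ Icc a ξ, ∀ s ∈ Icc a ξ,
      HasDerivAt (fun η => Γ η t s) (D ξ t s) ξ) :
    ∀ ξ ∈ Ioc a b, ∀ t ∈ Icc a ξ, ∀ s ∈ Icc a ξ,
      D ξ t s = Γ ξ t ξ * Γ ξ ξ s :=
  resolvent_deriv_general n a b K hK Γ hΓcont hres1 hres2 D hDcont hderiv
end

section
/- Let φ be the unique solution of φ(t) − ∫_a^b K(t,s)φ(s)ds = f(t), with resolvent kernel Γ_ξ of the truncated equation for each ξ. Then φ(t) = g(t) + ∫_t^b Γ_ξ(t,ξ)g(ξ) dξ, where g(t) := f(t) + ∫_a^t Γ_t(t,s)f(s) ds. -/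
open Matrix intervalIntegral Set

attribute [local instance] Matrix.normedAddCommGroup Matrix.normedSpace

/-!
For ξ = b the resolvent Γ_b solves the full equation, so by uniqueness
φ(t) = f(t) + H(b), where H(x) := ∫_a^x Γ_x(t,s) f(s) ds for fixed t. Differentiating H
(Leibniz rule, with ∂_ξ Γ_ξ(t,s) = Γ_ξ(t,ξ) Γ_ξ(ξ,s)) gives H'(ξ) = Γ_ξ(t,ξ) g(ξ), hence
H(b) = H(t) + ∫_t^b Γ_ξ(t,ξ) g(ξ) dξ and f(t) + H(t) = g(t).
The Leibniz rule is used only in integrated form: the fundamental theorem of calculus in ξ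
for each fixed s, followed by Fubini over the triangle {s < ξ}.
-/

open MeasureTheory

section Leibniz

variable {E : Type*} [NormedAddCommGroup E] [NormedSpace ℝ E]

theorem intervalIntegral_integral_swap {F : ℝ → ℝ → E} (hF : Continuous (Function.uncurry F))
    (a b c d : ℝ) :
    ∫ x in a..b, ∫ y in c..d, F x y = ∫ y in c..d, ∫ x in a..b, F x y := by
  simp only [intervalIntegral_eq_integral_uIoc, MeasureTheory.integral_smul]
  rw [integral_integral_swap, smul_comm]
  rw [Measure.prod_restrict, ← Measure.volume_eq_prod]
  exact (hF.continuousOn.integrableOn_compact (isCompact_uIcc.prod isCompact_uIcc)).mono_set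
    (prod_mono uIoc_subset_uIcc uIoc_subset_uIcc)

theorem intervalIntegral_integral_max_swap {F : ℝ → ℝ → E}
    (hF : Continuous (Function.uncurry F)) {a t b : ℝ} (hat : a ≤ t) (htb : t ≤ b) :
    ∫ s in a..b, ∫ ξ in max t s..b, F s ξ = ∫ ξ in t..b, ∫ s in a..ξ, F s ξ := by
  -- With the strict inequality both kinds of slices of the triangle are exact intervals.
  set W : ℝ → ℝ → E := fun s ξ => {p : ℝ × ℝ | p.1 < p.2}.indicator (Function.uncurry F) (s, ξ)
  have hW : Integrable (Function.uncurry W)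
      ((volume.restrict (Ioc a b)).prod (volume.restrict (Ioc t b))) := by
    rw [Measure.prod_restrict, ← Measure.volume_eq_prod]
    exact ((hF.continuousOn.integrableOn_compact (isCompact_Icc.prod isCompact_Icc)).mono_set
      (prod_mono Ioc_subset_Icc_self Ioc_subset_Icc_self)).indicator
      (measurableSet_lt measurable_fst measurable_snd)
  have hslice_s : ∀ s ∈ Ioc a b, ∫ ξ in Ioc t b, W s ξ = ∫ ξ in max t s..b, F s ξ := by
    intro s hs
    have hset : Ioi s ∩ Ioc t b = Ioc (max t s) b := by
      ext ξ
      simp only [mem_inter_iff, mem_Ioi, mem_Ioc, max_lt_iff]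
      tauto
    rw [show (fun ξ => W s ξ) = (Ioi s).indicator (F s) from rfl,
      MeasureTheory.integral_indicator measurableSet_Ioi,
      Measure.restrict_restrict measurableSet_Ioi, hset, integral_of_le (max_le htb hs.2)]
  have hslice_ξ : ∀ ξ ∈ Ioc t b, ∫ s in Ioc a b, W s ξ = ∫ s in a..ξ, F s ξ := by
    intro ξ hξ
    have hset : Iio ξ ∩ Ioc a b = Ioo a ξ := by
      ext s
      simp only [mem_inter_iff, mem_Iio, mem_Ioc, mem_Ioo]
      exact ⟨fun ⟨hsξ, has, _⟩ => ⟨has, hsξ⟩, fun ⟨has, hsξ⟩ => ⟨hsξ, has, hsξ.le.trans hξ.2⟩⟩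
    rw [show (fun s => W s ξ) = (Iio ξ).indicator (fun s => F s ξ) from rfl,
      MeasureTheory.integral_indicator measurableSet_Iio,
      Measure.restrict_restrict measurableSet_Iio, hset, integral_of_le (hat.trans hξ.1.le),
      integral_Ioc_eq_integral_Ioo]
  rw [integral_of_le (hat.trans htb), integral_of_le htb,
    ← setIntegral_congr_fun measurableSet_Ioc hslice_s,
    ← setIntegral_congr_fun measurableSet_Ioc hslice_ξ, integral_integral_swap hW]

theorem integral_comp_max_eq_add {g : ℝ → ℝ → E} (hg : Continuous (Function.uncurry g))
    {a t b : ℝ} (hat : a ≤ t) (htb : t ≤ b) :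
    ∫ s in a..b, g (max t s) s = (∫ s in a..t, g t s) + ∫ s in t..b, g s s := by
  have hcont : Continuous fun s => g (max t s) s := by fun_prop
  rw [← integral_add_adjacent_intervals (hcont.intervalIntegrable a t)
    (hcont.intervalIntegrable t b)]
  congr 1 <;> refine integral_congr fun s hs => ?_
  · rw [uIcc_of_le hat] at hs
    simp only [max_eq_left hs.2]
  · rw [uIcc_of_le htb] at hs
    simp only [max_eq_right hs.1]

theorem integral_leibniz_of_hasDerivAt [CompleteSpace E] {G G' : ℝ → ℝ → E}
    (hG : Continuous (Function.uncurry G)) (hG' : Continuous (Function.uncurry G'))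
    {a t b : ℝ} (hat : a ≤ t) (htb : t ≤ b)
    (hderiv : ∀ s ∈ Icc a b, ∀ ξ ∈ Icc (max t s) b, HasDerivAt (G · s) (G' ξ s) ξ) :
    ∫ s in a..b, G b s = (∫ s in a..t, G t s) + ∫ ξ in t..b, (G ξ ξ + ∫ s in a..ξ, G' ξ s) := by
  have hftc : ∀ s ∈ uIcc a b, G b s = G (max t s) s + ∫ ξ in max t s..b, G' ξ s := by
    intro s hs
    rw [uIcc_of_le (hat.trans htb)] at hs
    have hmax : max t s ≤ b := max_le htb hs.2
    have hG's : Continuous fun ξ => G' ξ s := by fun_prop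
    rw [integral_eq_sub_of_hasDerivAt (fun ξ hξ => hderiv s hs ξ (uIcc_of_le hmax ▸ hξ))
      (hG's.intervalIntegrable _ _), add_sub_cancel]
  have hhead : Continuous fun s => G (max t s) s := by fun_prop
  have htail : Continuous fun s => ∫ ξ in max t s..b, G' ξ s := by
    -- `fun_prop` knows continuity in a variable upper limit only
    simp only [integral_symm b]
    fun_prop
  have hdiag : Continuous fun ξ => G ξ ξ := by fun_prop
  have hprim : Continuous fun ξ => ∫ s in a..ξ, G' ξ s := by fun_prop
  rw [integral_congr hftc,
    integral_add (hhead.intervalIntegrable _ _) (htail.intervalIntegrable _ _),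
    integral_comp_max_eq_add hG hat htb,
    intervalIntegral_integral_max_swap (F := fun s ξ => G' ξ s) (hG'.comp continuous_swap) hat htb,
    integral_add (hdiag.intervalIntegrable _ _) (hprim.intervalIntegrable _ _), add_assoc]

end Leibniz

namespace Matrix

variable {ι 𝕜 : Type*} [Fintype ι] [RCLike 𝕜]

theorem mulVec_intervalIntegral (A : Matrix ι ι 𝕜) {g : ℝ → ι → 𝕜} {a b : ℝ}
    (hg : IntervalIntegrable g volume a b) :
    A *ᵥ ∫ x in a..b, g x = ∫ x in a..b, A *ᵥ g x :=
  (A.mulVecLin.toContinuousLinearMap.intervalIntegral_comp_comm hg).symm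

theorem intervalIntegral_mulVec {A : ℝ → Matrix ι ι 𝕜} (hA : Continuous A) (a b : ℝ)
    (v : ι → 𝕜) :
    (∫ x in a..b, A x) *ᵥ v = ∫ x in a..b, A x *ᵥ v :=
  (((mulVecBilin 𝕜 𝕜).flip v).toContinuousLinearMap.intervalIntegral_comp_comm
    (hA.intervalIntegrable a b)).symm

theorem _root_.HasDerivAt.matrix_mulVec_const {A : ℝ → Matrix ι ι 𝕜} {A' : Matrix ι ι 𝕜} {x : ℝ}
    (hA : HasDerivAt A A' x) (v : ι → 𝕜) : HasDerivAt (fun y => A y *ᵥ v) (A' *ᵥ v) x :=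
  (((mulVecBilin ℝ 𝕜).flip v).toContinuousLinearMap.hasFDerivAt.comp_hasDerivAt x hA :)

theorem sub_integral_mulVec_eq_of_resolvent {K R : ℝ → ℝ → Matrix ι ι 𝕜} {f : ℝ → ι → 𝕜}
    (hK : Continuous (Function.uncurry K)) (hR : Continuous (Function.uncurry R))
    (hf : Continuous f) {a b : ℝ}
    (hres : ∀ t ∈ Icc a b, ∀ s ∈ Icc a b, R t s - ∫ u in a..b, K t u * R u s = K t s) :
    ∀ t ∈ Icc a b, (f t + ∫ s in a..b, R t s *ᵥ f s)
      - ∫ s in a..b, K t s *ᵥ (f s + ∫ u in a..b, R s u *ᵥ f u) = f t := by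
  intro t ht
  have hKR : Continuous (Function.uncurry fun s u => (K t s * R s u) *ᵥ f u) := by
    unfold Function.uncurry
    fun_prop
  have hKf : IntervalIntegrable (fun s => K t s *ᵥ f s) volume a b :=
    Continuous.intervalIntegrable (by fun_prop) _ _
  have hRf : IntervalIntegrable (fun u => R t u *ᵥ f u) volume a b :=
    Continuous.intervalIntegrable (by fun_prop) _ _
  have hdistrib : ∀ s, K t s *ᵥ (f s + ∫ u in a..b, R s u *ᵥ f u)
      = K t s *ᵥ f s + ∫ u in a..b, (K t s * R s u) *ᵥ f u := by
    intro s
    rw [mulVec_add, mulVec_intervalIntegral _ (Continuous.intervalIntegrable (by fun_prop) _ _)]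
    simp only [mulVec_mulVec]
  have hinner : ∀ u ∈ uIcc a b,
      ∫ s in a..b, (K t s * R s u) *ᵥ f u = R t u *ᵥ f u - K t u *ᵥ f u := by
    intro u hu
    rw [uIcc_of_le (ht.1.trans ht.2)] at hu
    rw [← intervalIntegral_mulVec (by fun_prop), ← sub_mulVec, ← hres t ht u hu, sub_sub_cancel]
  simp only [hdistrib]
  rw [integral_add hKf (Continuous.intervalIntegrable (by fun_prop) _ _),
    intervalIntegral_integral_swap hKR, integral_congr hinner, integral_sub hRf hKf]
  abel

end Matrix

theorem resolvent_representation_general (n : ℕ) (a b : ℝ) (hab : a < b)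
    (K : ℝ → ℝ → Matrix (Fin n) (Fin n) ℂ)
    (hK : Continuous fun p : ℝ × ℝ => K p.1 p.2)
    (f : ℝ → Fin n → ℂ) (hf : Continuous f)
    (Γ : ℝ → ℝ → ℝ → Matrix (Fin n) (Fin n) ℂ)  -- Γ ξ t s
    (hΓcont : Continuous fun p : ℝ × ℝ × ℝ => Γ p.1 p.2.1 p.2.2)
    (hres1 : ∀ ξ ∈ Ioc a b, ∀ t ∈ Icc a ξ, ∀ s ∈ Icc a ξ,
      Γ ξ t s - ∫ u in a..ξ, K t u * Γ ξ u s = K t s)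
    (hΓderiv : ∀ ξ ∈ Icc a b, ∀ t ∈ Icc a ξ, ∀ s ∈ Icc a ξ,
      HasDerivAt (fun η => Γ η t s) (Γ ξ t ξ * Γ ξ ξ s) ξ)
    -- φ is the unique continuous solution of the full equation
    (φ : ℝ → Fin n → ℂ)
    (hφuniq : ∀ ψ : ℝ → Fin n → ℂ, Continuous ψ →
      (∀ t ∈ Icc a b, ψ t - ∫ s in a..b, K t s *ᵥ ψ s = f t) →
      ∀ t ∈ Icc a b, ψ t = φ t) :
    ∀ t ∈ Icc a b,
      φ t = (f t + ∫ s in a..t, Γ t t s *ᵥ f s)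
        + ∫ ξ in t..b, Γ ξ t ξ *ᵥ (f ξ + ∫ s in a..ξ, Γ ξ ξ s *ᵥ f s) := by
  have hΓ : ∀ {X : Type} [TopologicalSpace X] {u v w : X → ℝ}, Continuous u → Continuous v →
      Continuous w → Continuous fun x => Γ (u x) (v x) (w x) :=
    fun hu hv hw => hΓcont.comp (hu.prodMk (hv.prodMk hw))
  intro t ht
  have hφt : φ t = f t + ∫ s in a..b, Γ b t s *ᵥ f s :=
    (hφuniq _ (by fun_prop) (sub_integral_mulVec_eq_of_resolvent (by fun_prop) (by fun_prop) hf
      (hres1 b ⟨hab, le_rfl⟩)) t ht).symm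
  have hderiv : ∀ s ∈ Icc a b, ∀ ξ ∈ Icc (max t s) b,
      HasDerivAt (fun η => Γ η t s *ᵥ f s) ((Γ ξ t ξ * Γ ξ ξ s) *ᵥ f s) ξ := by
    intro s hs ξ hξ
    have htξ : t ≤ ξ := (le_max_left t s).trans hξ.1
    have hsξ : s ≤ ξ := (le_max_right t s).trans hξ.1
    exact (hΓderiv ξ ⟨ht.1.trans htξ, hξ.2⟩ t ⟨ht.1, htξ⟩ s ⟨hs.1, hsξ⟩).matrix_mulVec_const _
  rw [hφt, add_assoc, integral_leibniz_of_hasDerivAt (by fun_prop) (by fun_prop) ht.1 ht.2 hderiv]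
  congr 2
  refine integral_congr fun ξ _ => ?_
  have hΓf : Continuous fun s => Γ ξ ξ s *ᵥ f s := by fun_prop
  simp only [mulVec_add, mulVec_intervalIntegral _ (hΓf.intervalIntegrable _ _), mulVec_mulVec]

/-- the unique solution φ of the full system is given by
φ(t) = g(t) + ∫_t^b Γ_ξ(t,ξ) g(ξ) dξ, where g(t) = f(t) + ∫_a^t Γ_t(t,s) f(s) ds. -/
theorem resolvent_representation (n : ℕ) (a b : ℝ) (hab : a < b)
    (K : ℝ → ℝ → Matrix (Fin n) (Fin n) ℂ)
    (hK : Continuous fun p : ℝ × ℝ => K p.1 p.2)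
    (f : ℝ → Fin n → ℂ) (hf : Continuous f)
    (Γ : ℝ → ℝ → ℝ → Matrix (Fin n) (Fin n) ℂ)  -- Γ ξ t s
    (hΓcont : Continuous fun p : ℝ × ℝ × ℝ => Γ p.1 p.2.1 p.2.2)
    (hres1 : ∀ ξ ∈ Ioc a b, ∀ t ∈ Icc a ξ, ∀ s ∈ Icc a ξ,
      Γ ξ t s - ∫ u in a..ξ, K t u * Γ ξ u s = K t s)
    (hres2 : ∀ ξ ∈ Ioc a b, ∀ t ∈ Icc a ξ, ∀ s ∈ Icc a ξ,
      Γ ξ t s - ∫ u in a..ξ, Γ ξ t u * K u s = K t s)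
    (hΓderiv : ∀ ξ ∈ Icc a b, ∀ t ∈ Icc a ξ, ∀ s ∈ Icc a ξ,
      HasDerivAt (fun η => Γ η t s) (Γ ξ t ξ * Γ ξ ξ s) ξ)
    -- φ is the unique continuous solution of the full equation
    (φ : ℝ → Fin n → ℂ) (hφcont : Continuous φ)
    (hφ : ∀ t ∈ Icc a b, φ t - ∫ s in a..b, K t s *ᵥ φ s = f t)
    (hφuniq : ∀ ψ : ℝ → Fin n → ℂ, Continuous ψ →
      (∀ t ∈ Icc a b, ψ t - ∫ s in a..b, K t s *ᵥ ψ s = f t) →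
      ∀ t ∈ Icc a b, ψ t = φ t) :
    ∀ t ∈ Icc a b,
      φ t = (f t + ∫ s in a..t, Γ t t s *ᵥ f s)
        + ∫ ξ in t..b, Γ ξ t ξ *ᵥ (f ξ + ∫ s in a..ξ, Γ ξ ξ s *ᵥ f s) :=
  resolvent_representation_general n a b hab K hK f hf Γ hΓcont hres1 hΓderiv φ hφuniq
end

section
/- Let H : ℝ → M_n(ℂ) be even (H(−t) = H(t)) and continuous on [−2a,2a]. If for ξ ∈ (0,2a] the equation g(t,ξ) + ∫_0^ξ H(t−s)g(s,ξ) ds = I has a unique continuous solution g(·,ξ) on [0,ξ], then g satisfies the symmetry g(t,ξ) = g(ξ−t, ξ) for 0 ≤ t ≤ ξ. -/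
open Matrix intervalIntegral Set

attribute [local instance] Matrix.normedAddCommGroup Matrix.normedSpace

/-- for an even continuous matrix kernel H, the unique solution of
g(t,ξ) + ∫_0^ξ H(t−s) g(s,ξ) ds = I satisfies the symmetry g(t,ξ) = g(ξ−t,ξ). -/
theorem g_symmetry (n : ℕ) (a : ℝ) (ha : 0 < a)
    (H : ℝ → Matrix (Fin n) (Fin n) ℂ)
    (hHeven : ∀ t, H (-t) = H t)
    (hHcont : ContinuousOn H (Icc (-(2 * a)) (2 * a)))
    (g : ℝ → ℝ → Matrix (Fin n) (Fin n) ℂ)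
    (hgcont : ∀ ξ ∈ Ioc 0 (2 * a), ContinuousOn (fun t => g t ξ) (Icc 0 ξ))
    (hg : ∀ ξ ∈ Ioc 0 (2 * a), ∀ t ∈ Icc 0 ξ,
      g t ξ + ∫ s in (0:ℝ)..ξ, H (t - s) * g s ξ = 1)
    (hguniq : ∀ ξ ∈ Ioc 0 (2 * a), ∀ h : ℝ → Matrix (Fin n) (Fin n) ℂ,
      ContinuousOn h (Icc 0 ξ) →
      (∀ t ∈ Icc 0 ξ, h t + ∫ s in (0:ℝ)..ξ, H (t - s) * h s = 1) →
      ∀ t ∈ Icc 0 ξ, h t = g t ξ) :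
    ∀ ξ ∈ Ioc 0 (2 * a), ∀ t ∈ Icc 0 ξ, g t ξ = g (ξ - t) ξ := by
  intro ξ hξ t ht
  have key : ∀ t ∈ Icc (0:ℝ) ξ, g (ξ - t) ξ = g t ξ := by
    apply hguniq ξ hξ (fun t => g (ξ - t) ξ)
    · apply (hgcont ξ hξ).comp ((continuous_const.sub continuous_id).continuousOn)
      intro x hx
      exact ⟨by simp [hx.2], by simp; linarith [hx.1]⟩
    · intro u hu
      have h1 : (∫ s in (0:ℝ)..ξ, H (u - s) * g (ξ - s) ξ)
          = ∫ s in (0:ℝ)..ξ, H ((ξ - u) - s) * g s ξ := by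
        have := intervalIntegral.integral_comp_sub_left
          (a := (0:ℝ)) (b := ξ) (fun s => H ((ξ - u) - s) * g s ξ) ξ
        simp only [sub_self, sub_zero] at this
        rw [← this]
        congr 1
        ext s
        have : (ξ - u) - (ξ - s) = -(u - s) := by ring
        rw [this, hHeven]
      rw [h1]
      exact hg ξ hξ (ξ - u) ⟨by linarith [hu.2], by linarith [hu.1]⟩
  exact (key t ht).symm
end

section
/- Let H : ℝ → M_n(ℂ) be even and continuous, and suppose for each ξ ∈ (0,2a] the equation g*(t,ξ) + ∫_0^ξ g*(s,ξ)H(s−t) ds = I has a unique continuous solution. Then g*(t,ξ) = g*(ξ−t,ξ) for 0 ≤ t ≤ ξ. -/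
open Matrix intervalIntegral Set

attribute [local instance] Matrix.normedAddCommGroup Matrix.normedSpace

/-- for an even continuous matrix kernel H, the unique solution of
g*(t,ξ) + ∫_0^ξ g*(s,ξ) H(s−t) ds = I satisfies the symmetry g*(t,ξ) = g*(ξ−t,ξ). -/
theorem gstar_symmetry (n : ℕ) (a : ℝ) (ha : 0 < a)
    (H : ℝ → Matrix (Fin n) (Fin n) ℂ)
    (hHeven : ∀ t, H (-t) = H t)
    (hHcont : ContinuousOn H (Icc (-(2 * a)) (2 * a)))
    (gs : ℝ → ℝ → Matrix (Fin n) (Fin n) ℂ)  -- g*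
    (hgscont : ∀ ξ ∈ Ioc 0 (2 * a), ContinuousOn (fun t => gs t ξ) (Icc 0 ξ))
    (hgs : ∀ ξ ∈ Ioc 0 (2 * a), ∀ t ∈ Icc 0 ξ,
      gs t ξ + ∫ s in (0:ℝ)..ξ, gs s ξ * H (s - t) = 1)
    (hgsuniq : ∀ ξ ∈ Ioc 0 (2 * a), ∀ h : ℝ → Matrix (Fin n) (Fin n) ℂ,
      ContinuousOn h (Icc 0 ξ) →
      (∀ t ∈ Icc 0 ξ, h t + ∫ s in (0:ℝ)..ξ, h s * H (s - t) = 1) →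
      ∀ t ∈ Icc 0 ξ, h t = gs t ξ) :
    ∀ ξ ∈ Ioc 0 (2 * a), ∀ t ∈ Icc 0 ξ, gs t ξ = gs (ξ - t) ξ := by
  intro ξ hξ t ht
  set h : ℝ → Matrix (Fin n) (Fin n) ℂ := fun t => gs (ξ - t) ξ with hh
  have hmaps : MapsTo (fun t : ℝ => ξ - t) (Icc 0 ξ) (Icc 0 ξ) := by
    intro x hx
    simp only [mem_Icc] at hx ⊢
    constructor <;> linarith [hx.1, hx.2]
  have hcont : ContinuousOn h (Icc 0 ξ) :=
    (hgscont ξ hξ).comp (continuousOn_const.sub continuousOn_id) hmaps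
  have heq : ∀ t ∈ Icc 0 ξ, h t + ∫ s in (0:ℝ)..ξ, h s * H (s - t) = 1 := by
    intro t ht
    have hsub : (∫ s in (0:ℝ)..ξ, h s * H (s - t))
        = ∫ u in (0:ℝ)..ξ, gs u ξ * H (u - (ξ - t)) := by
      have := intervalIntegral.integral_comp_sub_left
        (a := 0) (b := ξ) (fun u => gs u ξ * H (ξ - u - t)) ξ
      simp only [sub_zero, sub_self] at this
      calc (∫ s in (0:ℝ)..ξ, h s * H (s - t))
          = ∫ s in (0:ℝ)..ξ, gs (ξ - s) ξ * H (ξ - (ξ - s) - t) := by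
            simp only [hh, sub_sub_cancel]
        _ = ∫ u in (0:ℝ)..ξ, gs u ξ * H (ξ - u - t) := this
        _ = ∫ u in (0:ℝ)..ξ, gs u ξ * H (u - (ξ - t)) := by
            congr 1; ext u
            rw [show ξ - u - t = -(u - (ξ - t)) by ring, hHeven]
    rw [hsub]
    exact hgs ξ hξ (ξ - t) (hmaps ht)
  exact (hgsuniq ξ hξ h hcont heq t ht).symm
end
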